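/- Let d ≥ 1 and C ≥ 1. Let w : Fin C → EuclideanSpace ℝ (Fin d) and b : Fin C → ℝ define logits g(z) c = ⟪w c, z⟫ + b c, and let p(z) = softmax(g(z)). Then for ANY probability measure ν on EuclideanSpace ℝ (Fin d), ∫⁻ ∫⁻ ENNReal.ofReal (−log (∑_c p(x) c * p(y) c)) dν(x) dν(y) ≤ 2 * ∑_c ∫⁻ ENNReal.ofReal (−log (p(x) c)) dν(x), where both sides are Lebesgue integrals of nonnegative measurable functions with values in [0, ∞]. -/

import Mathlib

open MeasureTheory ProbabilityTheory Real
open scoped RealInnerProductSpace BigOperators ENNReal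

/-- The multivariate Gaussian measure `N(μ, S)` on `EuclideanSpace ℝ (Fin d)` with mean `μ` and
positive semidefinite covariance matrix `S`, realized as the pushforward of the standard
Gaussian under the affine map `x ↦ μ + √S x`. -/
noncomputable def multiGaussian {d : ℕ} (μ : EuclideanSpace ℝ (Fin d))
    (S : Matrix (Fin d) (Fin d) ℝ) (hS : S.PosSemidef) :
    Measure (EuclideanSpace ℝ (Fin d)) :=
  (MeasureTheory.Measure.pi fun _ : Fin d => gaussianReal 0 1).map
    (fun x => μ + (EuclideanSpace.equiv (Fin d) ℝ).symm ((hS.1.eigenvectorUnitary.1 * Matrix.diagonal ((RCLike.ofReal : ℝ → ℝ) ∘ (√·) ∘ hS.1.eigenvalues) *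
      (star hS.1.eigenvectorUnitary : Matrix (Fin d) (Fin d) ℝ) : Matrix (Fin d) (Fin d) ℝ).mulVec x))

/-- The quadratic form `aᵀ S a = ∑ p q, a p * S p q * a q`. -/
def quadForm {d : ℕ} (S : Matrix (Fin d) (Fin d) ℝ) (a : EuclideanSpace ℝ (Fin d)) : ℝ :=
  ∑ p, ∑ q, a p * S p q * a q

/-- Softmax of a vector of logits. -/
noncomputable def softmax {C : ℕ} (v : Fin C → ℝ) (c : Fin C) : ℝ :=
  Real.exp (v c) / ∑ c', Real.exp (v c')

/-- A nonnegative scalar multiple of a positive semidefinite matrix is positive semidefinite. -/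
theorem posSemidef_smul {d : ℕ} {S : Matrix (Fin d) (Fin d) ℝ} (hS : S.PosSemidef)
    {c : ℝ} (hc : 0 ≤ c) : (c • S).PosSemidef := by
  refine Matrix.PosSemidef.of_dotProduct_mulVec_nonneg ?_ fun x => ?_
  · unfold Matrix.IsHermitian
    rw [Matrix.conjTranspose_smul, hS.1]
    simp
  · rw [Matrix.smul_mulVec]
    simp only [dotProduct_smul, smul_eq_mul]
    exact mul_nonneg hc (hS.dotProduct_mulVec_nonneg x)

/-!
Keeping only the term of one fixed class `c₀` in `∑ c, p x c * p y c` gives the pointwise bound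
`-log (p(x)ᵀ p(y)) ≤ -log (p x c₀) - log (p y c₀)`. Integrating it in `x` and then in `y` bounds the
double integral by twice the expected cross-entropy of class `c₀`, which is one summand of the
right-hand side.
-/

theorem softmax_pos {C : ℕ} (v : Fin C → ℝ) (c : Fin C) : 0 < softmax v c :=
  div_pos (exp_pos _) (Finset.sum_pos (fun _ _ => exp_pos _) ⟨c, Finset.mem_univ c⟩)

theorem neg_log_sum_mul_le {ι : Type*} [Fintype ι] {p q : ι → ℝ} (hp : ∀ i, 0 ≤ p i)
    (hq : ∀ i, 0 ≤ q i) {c : ι} (hpc : 0 < p c) (hqc : 0 < q c) :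
    -log (∑ i, p i * q i) ≤ -log (p c) + -log (q c) := by
  have hterm : p c * q c ≤ ∑ i, p i * q i :=
    Finset.single_le_sum (fun i _ => mul_nonneg (hp i) (hq i)) (Finset.mem_univ c)
  have hlog := log_le_log (mul_pos hpc hqc) hterm
  rw [log_mul hpc.ne' hqc.ne'] at hlog
  linarith

theorem ofReal_neg_log_sum_mul_le {ι : Type*} [Fintype ι] {p q : ι → ℝ} (hp : ∀ i, 0 ≤ p i)
    (hq : ∀ i, 0 ≤ q i) {c : ι} (hpc : 0 < p c) (hqc : 0 < q c) :
    ENNReal.ofReal (-log (∑ i, p i * q i))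
      ≤ ENNReal.ofReal (-log (p c)) + ENNReal.ofReal (-log (q c)) :=
  (ENNReal.ofReal_le_ofReal (neg_log_sum_mul_le hp hq hpc hqc)).trans ENNReal.ofReal_add_le

theorem lintegral_lintegral_le_two_mul_of_le_add {α : Type*} [MeasurableSpace α]
    {μ : Measure α} [IsProbabilityMeasure μ] {F : α → α → ℝ≥0∞} {f : α → ℝ≥0∞}
    (hF : ∀ x y, F x y ≤ f x + f y) :
    ∫⁻ y, ∫⁻ x, F x y ∂μ ∂μ ≤ 2 * ∫⁻ x, f x ∂μ := by
  have hinner : ∀ y, ∫⁻ x, F x y ∂μ ≤ ∫⁻ x, f x ∂μ + f y := fun y =>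
    calc ∫⁻ x, F x y ∂μ ≤ ∫⁻ x, (f x + f y) ∂μ := lintegral_mono fun x => hF x y
      _ = ∫⁻ x, f x ∂μ + f y := by
        rw [lintegral_add_right _ measurable_const, lintegral_const, measure_univ, mul_one]
  calc ∫⁻ y, ∫⁻ x, F x y ∂μ ∂μ ≤ ∫⁻ y, (∫⁻ x, f x ∂μ + f y) ∂μ := lintegral_mono hinner
    _ = ∫⁻ x, f x ∂μ + ∫⁻ x, f x ∂μ := by
      rw [lintegral_add_left measurable_const, lintegral_const, measure_univ, mul_one]
    _ = 2 * ∫⁻ x, f x ∂μ := (two_mul _).symm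

theorem double_lintegral_efa_le_general (d C : ℕ) (hC : 1 ≤ C)
    (g : EuclideanSpace ℝ (Fin d) → Fin C → ℝ)
    (p : EuclideanSpace ℝ (Fin d) → Fin C → ℝ)
    (hp : ∀ z, p z = softmax (g z))
    (ν : Measure (EuclideanSpace ℝ (Fin d))) [IsProbabilityMeasure ν] :
    ∫⁻ y, ∫⁻ x, ENNReal.ofReal (-Real.log (∑ c, p x c * p y c)) ∂ν ∂ν
      ≤ 2 * ∑ c, ∫⁻ x, ENNReal.ofReal (-Real.log (p x c)) ∂ν := by
  let c₀ : Fin C := ⟨0, hC⟩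
  have hpos : ∀ z c, 0 < p z c := fun z c => hp z ▸ softmax_pos (g z) c
  calc ∫⁻ y, ∫⁻ x, ENNReal.ofReal (-Real.log (∑ c, p x c * p y c)) ∂ν ∂ν
      ≤ 2 * ∫⁻ x, ENNReal.ofReal (-Real.log (p x c₀)) ∂ν :=
        lintegral_lintegral_le_two_mul_of_le_add fun x y =>
          ofReal_neg_log_sum_mul_le (fun c => (hpos x c).le) (fun c => (hpos y c).le)
            (hpos x c₀) (hpos y c₀)
    _ ≤ 2 * ∑ c, ∫⁻ x, ENNReal.ofReal (-Real.log (p x c)) ∂ν := by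
      gcongr
      exact Finset.single_le_sum (f := fun c => ∫⁻ x, ENNReal.ofReal (-Real.log (p x c)) ∂ν)
        (fun _ _ => zero_le) (Finset.mem_univ c₀)

/-- Measure-free intermediate claim in Proposition 1: the double expectation of the explicit
feature augmentation loss -log(p(x)ᵀ p(y)) over two i.i.d. features drawn from ANY probability
measure ν is at most twice the per-class expected cross-entropy. -/
theorem double_lintegral_efa_le (d C : ℕ) (hd : 1 ≤ d) (hC : 1 ≤ C)
    (w : Fin C → EuclideanSpace ℝ (Fin d)) (b : Fin C → ℝ)
    (g : EuclideanSpace ℝ (Fin d) → Fin C → ℝ)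
    (hg : ∀ z c, g z c = ⟪w c, z⟫ + b c)
    (p : EuclideanSpace ℝ (Fin d) → Fin C → ℝ)
    (hp : ∀ z, p z = softmax (g z))
    (ν : Measure (EuclideanSpace ℝ (Fin d))) [IsProbabilityMeasure ν] :
    ∫⁻ y, ∫⁻ x, ENNReal.ofReal (-Real.log (∑ c, p x c * p y c)) ∂ν ∂ν
      ≤ 2 * ∑ c, ∫⁻ x, ENNReal.ofReal (-Real.log (p x c)) ∂ν :=
  double_lintegral_efa_le_general d C hC g p hp ν
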